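/- Using the single-sample moments Var(x_p) = (1+ρ²)‖α‖² + α_p² (for the ES coordinate), Cov(x_p, y_p − x_p) = c_p = (1+ρ²)‖α‖² − 2α_p², and Var of the difference coordinate v = (2 + ρ² + 1/ρ²)‖α‖², the optimally-tuned per-coordinate control variate estimator has variance ∑_p [Var(x_p) − c_p²/v]/N ≤ (‖α‖²/N)·[(1+ρ²)d + 1 − d(1+ρ²)²/(2+ρ²+1/ρ²) + 4(1+ρ²)/(2+ρ²+1/ρ²)]. -/
import Mathlib


open BigOperators Finset

/-- Algebraic inequality for the optimally-tuned per-coordinate control variate: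
with `A = ‖α‖₂²`, single-sample moments `Var(x_p) = (1+ρ²)A + α_p²`,
`c_p = (1+ρ²)A − 2α_p²`, and `v = (2+ρ²+1/ρ²)A`,
`∑ₚ [Var(x_p) − c_p²/v]/N ≤ (A/N)·[(1+ρ²)d + 1 − d(1+ρ²)²/(2+ρ²+1/ρ²) + 4(1+ρ²)/(2+ρ²+1/ρ²)]`. -/
theorem cv_variance_upper_bound (d N : ℕ) (hN : 1 ≤ N) (α : Fin d → ℝ)
    (ρ : ℝ) (hρ : 0 < ρ) :
    (∑ p : Fin d,
        (((1 + ρ ^ 2) * (∑ i, (α i) ^ 2) + (α p) ^ 2)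
          - ((1 + ρ ^ 2) * (∑ i, (α i) ^ 2) - 2 * (α p) ^ 2) ^ 2
              / ((2 + ρ ^ 2 + 1 / ρ ^ 2) * (∑ i, (α i) ^ 2))) / N)
      ≤ ((∑ i, (α i) ^ 2) / N)
          * ((1 + ρ ^ 2) * d + 1
            - d * (1 + ρ ^ 2) ^ 2 / (2 + ρ ^ 2 + 1 / ρ ^ 2)
            + 4 * (1 + ρ ^ 2) / (2 + ρ ^ 2 + 1 / ρ ^ 2)) := by
  have hρ2 : (0:ℝ) < ρ ^ 2 := by positivity
  have hw : (0:ℝ) < 2 + ρ ^ 2 + 1 / ρ ^ 2 := by positivity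
  set A := ∑ i, (α i) ^ 2 with hA
  have hAnn : 0 ≤ A := Finset.sum_nonneg fun i _ => sq_nonneg _
  have hNpos : (0:ℝ) < N := by exact_mod_cast hN
  rcases eq_or_lt_of_le hAnn with h0 | hApos
  · have hall : ∀ i, (α i) ^ 2 = 0 := by
      intro i
      exact (Finset.sum_eq_zero_iff_of_nonneg fun i _ => sq_nonneg (α i)).mp h0.symm i
        (mem_univ i)
    simp [← h0, hall]
  · have hAne : A ≠ 0 := ne_of_gt hApos
    have hwA : (0:ℝ) < (2 + ρ ^ 2 + 1 / ρ ^ 2) * A := mul_pos hw hApos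
    rw [← Finset.sum_div, div_le_iff₀ hNpos, div_mul_eq_mul_div, div_mul_cancel₀ _ (ne_of_gt hNpos)]
    have hsum :
        ∑ p : Fin d,
            (((1 + ρ ^ 2) * A + (α p) ^ 2)
              - ((1 + ρ ^ 2) * A - 2 * (α p) ^ 2) ^ 2
                / ((2 + ρ ^ 2 + 1 / ρ ^ 2) * A))
          = ((d : ℝ) * (1 + ρ ^ 2) * A + A)
              - (∑ p : Fin d, ((1 + ρ ^ 2) * A - 2 * (α p) ^ 2) ^ 2)
                / ((2 + ρ ^ 2 + 1 / ρ ^ 2) * A) := by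
      rw [Finset.sum_sub_distrib, ← Finset.sum_div]
      congr 1
      rw [Finset.sum_add_distrib, Finset.sum_const, ← hA]
      simp [mul_comm, mul_assoc]
    rw [hsum]
    have hkey : (d : ℝ) * (1 + ρ ^ 2) ^ 2 * A ^ 2 - 4 * (1 + ρ ^ 2) * A ^ 2
        ≤ ∑ p : Fin d, ((1 + ρ ^ 2) * A - 2 * (α p) ^ 2) ^ 2 := by
      have hexp : ∀ p : Fin d, ((1 + ρ ^ 2) * A - 2 * (α p) ^ 2) ^ 2
          = (1 + ρ ^ 2) ^ 2 * A ^ 2 - 4 * (1 + ρ ^ 2) * A * (α p) ^ 2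
            + 4 * ((α p) ^ 2) ^ 2 := by intro p; ring
      have h1 : ∑ p : Fin d, ((1 + ρ ^ 2) ^ 2 * A ^ 2
            - 4 * (1 + ρ ^ 2) * A * (α p) ^ 2)
          ≤ ∑ p : Fin d, ((1 + ρ ^ 2) * A - 2 * (α p) ^ 2) ^ 2 := by
        apply Finset.sum_le_sum
        intro p _
        rw [hexp p]
        nlinarith [sq_nonneg ((α p) ^ 2)]
      refine le_trans (le_of_eq ?_) h1
      rw [Finset.sum_sub_distrib, Finset.sum_const, ← Finset.mul_sum, ← hA,
        Finset.card_univ, Fintype.card_fin]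
      push_cast
      ring
    have hmono : ((d : ℝ) * (1 + ρ ^ 2) ^ 2 * A ^ 2 - 4 * (1 + ρ ^ 2) * A ^ 2)
          / ((2 + ρ ^ 2 + 1 / ρ ^ 2) * A)
        ≤ (∑ p : Fin d, ((1 + ρ ^ 2) * A - 2 * (α p) ^ 2) ^ 2)
          / ((2 + ρ ^ 2 + 1 / ρ ^ 2) * A) := by gcongr
    have heq : A * ((1 + ρ ^ 2) * d + 1
          - d * (1 + ρ ^ 2) ^ 2 / (2 + ρ ^ 2 + 1 / ρ ^ 2)
          + 4 * (1 + ρ ^ 2) / (2 + ρ ^ 2 + 1 / ρ ^ 2))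
        = ((d : ℝ) * (1 + ρ ^ 2) * A + A)
          - ((d : ℝ) * (1 + ρ ^ 2) ^ 2 * A ^ 2 - 4 * (1 + ρ ^ 2) * A ^ 2)
            / ((2 + ρ ^ 2 + 1 / ρ ^ 2) * A) := by
      field_simp
      ring
    linarith [hmono]
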